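/- Let f(n, k) denote the number of words in [k]^n avoiding the generalized pattern 11-1. Then for all integers n ≥ 2 and k ≥ 1, f(n, k) = (k - 1)·f(n-1, k) + k·f(n-2, k-1). -/
import Mathlib


/-- The `i`-th letter (1-based value in `{1,…,k}`) of a word `w ∈ [k]^n`,
with value `0` outside the word. -/
def letter {n k : ℕ} (w : Fin n → Fin k) (i : ℕ) : ℕ :=
  if h : i < n then (w ⟨i, h⟩ : ℕ) + 1 else 0

/-- `w` avoids the generalized pattern 11-1: there are no 0-based indices
`i, j` with `i + 2 ≤ j < n` such that `w i = w (i+1) = w j`. -/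
def Avoids11d1 {n k : ℕ} (w : Fin n → Fin k) : Prop :=
  ∀ i j : ℕ, i + 2 ≤ j → j < n →
    ¬ (letter w i = letter w (i + 1) ∧ letter w j = letter w i)

/-- The number of words in `[k]^n` avoiding 11-1. -/
noncomputable def f (n k : ℕ) : ℕ := Nat.card {w : Fin n → Fin k // Avoids11d1 w}

lemma letter_lt {n k : ℕ} (w : Fin n → Fin k) {i : ℕ} (h : i < n) :
    letter w i = (w ⟨i, h⟩ : ℕ) + 1 := dif_pos h

lemma letter_ge {n k : ℕ} (w : Fin n → Fin k) {i : ℕ} (h : ¬ i < n) :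
    letter w i = 0 := dif_neg h

lemma letter_cons_zero {n k : ℕ} (a : Fin k) (v : Fin n → Fin k) :
    letter (Fin.cons a v) 0 = (a : ℕ) + 1 := by
  rw [letter_lt _ (Nat.succ_pos n)]; rfl

lemma letter_cons_succ {n k : ℕ} (a : Fin k) (v : Fin n → Fin k) (i : ℕ) :
    letter (Fin.cons a v) (i + 1) = letter v i := by
  rcases lt_or_ge i n with h | h
  · rw [letter_lt _ h, letter_lt (Fin.cons a v) (by omega : i + 1 < n + 1)]
    have : (⟨i + 1, by omega⟩ : Fin (n + 1)) = Fin.succ ⟨i, h⟩ := rfl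
    rw [this, Fin.cons_succ]
  · rw [letter_ge _ (by omega), letter_ge _ (by omega)]

lemma avoids_cons_iff {n k : ℕ} (a : Fin k) (v : Fin (n + 1) → Fin k) :
    Avoids11d1 (Fin.cons a v) ↔
      Avoids11d1 v ∧ (a = v 0 → ∀ j : ℕ, 1 ≤ j → (h : j < n + 1) → v ⟨j, h⟩ ≠ a) := by
  have hz : (0 : Fin (n + 1)) = ⟨0, Nat.succ_pos n⟩ := by ext; simp
  constructor
  · intro hw
    refine ⟨fun i j hij hj hc => ?_, fun hav j hj1 hj hc => ?_⟩
    · exact hw (i+1) (j+1) (by omega) (by omega)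
        (by rwa [letter_cons_succ, letter_cons_succ, letter_cons_succ])
    · refine hw 0 (j+1) (by omega) (by omega) ⟨?_, ?_⟩
      · rw [letter_cons_zero, show (0:ℕ) + 1 = 0 + 1 from rfl, letter_cons_succ,
            letter_lt v (Nat.succ_pos n), ← hz, ← hav]
      · rw [letter_cons_succ, letter_cons_zero, letter_lt v hj, hc]
  · rintro ⟨hav, h0⟩ i j hij hj ⟨h1, h2⟩
    rcases Nat.eq_zero_or_eq_succ_pred i with hi | hi
    · subst hi
      rw [letter_cons_zero, show (0:ℕ) + 1 = 0 + 1 from rfl, letter_cons_succ,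
          letter_lt v (Nat.succ_pos n)] at h1
      obtain ⟨j', rfl⟩ : ∃ j', j = j' + 1 := ⟨j - 1, by omega⟩
      rw [letter_cons_succ, letter_cons_zero, letter_lt v (by omega : j' < n + 1)] at h2
      have hav' : a = v 0 := by rw [hz]; exact Fin.val_injective (Nat.add_right_cancel h1)
      exact h0 hav' j' (by omega) (by omega) (Fin.val_injective (Nat.add_right_cancel h2))
    · obtain ⟨i', rfl⟩ : ∃ i', i = i' + 1 := ⟨i - 1, by omega⟩
      obtain ⟨j', rfl⟩ : ∃ j', j = j' + 1 := ⟨j - 1, by omega⟩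
      simp only [letter_cons_succ] at h1 h2
      exact hav i' j' (by omega) (by omega) ⟨h1, h2⟩

lemma avoids_comp_iff {n k k' : ℕ} (φ : Fin k → Fin k') (hφ : Function.Injective φ)
    (u : Fin n → Fin k) : Avoids11d1 (φ ∘ u) ↔ Avoids11d1 u := by
  have key : ∀ i j : ℕ, (letter (φ ∘ u) i = letter (φ ∘ u) j ↔ letter u i = letter u j) := by
    intro i j
    unfold letter
    split_ifs with h1 h2 h2
    · simp only [Function.comp_apply, add_left_inj]
      exact ⟨fun h => congrArg _ (hφ (Fin.val_injective h)),
             fun h => congrArg _ (congrArg φ (Fin.val_injective h))⟩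
    · simp
    · simp
    · simp
  constructor
  · intro hw i j hij hj hc
    exact hw i j hij hj ⟨(key i (i+1)).mpr hc.1, (key j i).mpr hc.2⟩
  · intro hw i j hij hj hc
    exact hw i j hij hj ⟨(key i (i+1)).mp hc.1, (key j i).mp hc.2⟩

lemma letter_tail {n k : ℕ} (w : Fin (n + 1) → Fin k) (i : ℕ) :
    letter (Fin.tail w) i = letter w (i + 1) := by
  rcases lt_or_ge i n with h | h
  · rw [letter_lt _ h, letter_lt w (by omega : i + 1 < n + 1)]
    have : (⟨i + 1, by omega⟩ : Fin (n + 1)) = Fin.succ ⟨i, h⟩ := rfl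
    rw [this]; rfl
  · rw [letter_ge _ (by omega), letter_ge _ (by omega)]

lemma tail_avoids {n k : ℕ} {w : Fin (n + 1) → Fin k} (hw : Avoids11d1 w) :
    Avoids11d1 (Fin.tail w) := by
  intro i j hij hj hc
  refine hw (i + 1) (j + 1) (by omega) (by omega) ?_
  rw [← letter_tail, ← letter_tail, ← letter_tail]
  exact hc

lemma avoids_pair_iff {n k : ℕ} (a : Fin k) (g : Fin n → Fin k) (hg : ∀ i, g i ≠ a) :
    Avoids11d1 (Fin.cons a (Fin.cons a g)) ↔ Avoids11d1 g := by
  have l0 : letter (Fin.cons a (Fin.cons a g) : Fin (n+2) → Fin k) 0 = (a : ℕ) + 1 :=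
    letter_cons_zero _ _
  have l1 : letter (Fin.cons a (Fin.cons a g) : Fin (n+2) → Fin k) 1 = (a : ℕ) + 1 := by
    have h' := letter_cons_succ a (Fin.cons a g) 0
    rw [letter_cons_zero] at h'
    exact h' 
  have l2 : ∀ i : ℕ, letter (Fin.cons a (Fin.cons a g) : Fin (n+2) → Fin k) (i + 2) =
      letter g i := by
    intro i
    rw [show i + 2 = (i + 1) + 1 from rfl, letter_cons_succ, letter_cons_succ]
  constructor
  · intro hW i j hij hj hc
    refine hW (i + 2) (j + 2) (by omega) (by omega) ?_
    rw [l2, show i + 2 + 1 = (i + 1) + 2 from rfl, l2, l2]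
    exact hc
  · intro hgav i j hij hj ⟨h1, h2⟩
    rcases Nat.lt_or_ge i 2 with hi | hi
    · obtain ⟨j', rfl⟩ : ∃ j', j = j' + 2 := ⟨j - 2, by omega⟩
      interval_cases i
      · rw [l2] at h2; rw [l0] at h2
        have hj' : j' < n := by omega
        rw [letter_lt g hj'] at h2
        exact hg ⟨j', hj'⟩ (Fin.val_injective (Nat.add_right_cancel h2))
      · rw [l1, show (1:ℕ) + 1 = 0 + 2 from rfl, l2] at h1
        have h0n : (0:ℕ) < n := by omega
        rw [letter_lt g h0n] at h1
        exact hg ⟨0, h0n⟩ (Fin.val_injective (Nat.add_right_cancel h1.symm))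
    · obtain ⟨i', rfl⟩ : ∃ i', i = i' + 2 := ⟨i - 2, by omega⟩
      obtain ⟨j', rfl⟩ : ∃ j', j = j' + 2 := ⟨j - 2, by omega⟩
      rw [l2, show i' + 2 + 1 = (i' + 1) + 2 from rfl, l2] at h1
      rw [l2, l2] at h2
      exact hgav i' j' (by omega) (by omega) ⟨h1, h2⟩

lemma succAbove_symm {l : ℕ} (p : Fin (l + 1)) (x : Fin (l + 1)) (hx : x ≠ p) :
    p.succAbove ((finSuccAboveEquiv p).symm ⟨x, hx⟩) = x := by
  have := (finSuccAboveEquiv p).apply_symm_apply ⟨x, hx⟩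
  rw [finSuccAboveEquiv_apply] at this
  exact congrArg Subtype.val this

lemma symm_succAbove {l : ℕ} (p : Fin (l + 1)) (c : Fin l) (h : p.succAbove c ≠ p) :
    (finSuccAboveEquiv p).symm ⟨p.succAbove c, h⟩ = c := by
  rw [Equiv.symm_apply_eq, finSuccAboveEquiv_apply]

lemma tailtail_ne {m l : ℕ} {w : Fin (m + 2) → Fin (l + 1)} (hw : Avoids11d1 w)
    (h : w 0 = w (Fin.succ 0)) (i : Fin m) : Fin.tail (Fin.tail w) i ≠ w 0 := by
  intro hc
  have hw' := hw 0 ((i : ℕ) + 2) (by omega) (by omega)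
  refine hw' ⟨?_, ?_⟩
  · rw [letter_lt w (by omega : 0 < m + 2), letter_lt w (by omega : 0 + 1 < m + 2)]
    congr 1
    show ((w ⟨0, _⟩ : Fin (l+1)) : ℕ) = _
    have e0 : (⟨0, by omega⟩ : Fin (m + 2)) = 0 := by ext; simp
    have e1 : (⟨0 + 1, by omega⟩ : Fin (m + 2)) = Fin.succ 0 := by ext; simp
    rw [e0, e1, h]
  · rw [letter_lt w (by omega : (i : ℕ) + 2 < m + 2), letter_lt w (by omega : 0 < m + 2)]
    have e0 : (⟨0, by omega⟩ : Fin (m + 2)) = 0 := by ext; simp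
    have e2 : (⟨(i : ℕ) + 2, by omega⟩ : Fin (m + 2)) = Fin.succ (Fin.succ i) := by ext; simp
    rw [e0, e2]
    exact congrArg (fun x : Fin (l+1) => (x : ℕ) + 1) hc

lemma fwd_avoids2 {m l : ℕ} {w : Fin (m + 2) → Fin (l + 1)} (hw : Avoids11d1 w)
    (h : w 0 = w (Fin.succ 0)) :
    Avoids11d1 (fun i => (finSuccAboveEquiv (w 0)).symm
      ⟨Fin.tail (Fin.tail w) i, tailtail_ne hw h i⟩) := by
  have hg : Avoids11d1 (Fin.tail (Fin.tail w)) := tail_avoids (tail_avoids hw)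
  have hinj : Function.Injective (w 0).succAbove := Fin.succAbove_right_injective
  refine (avoids_comp_iff _ hinj _).mp ?_
  have : (w 0).succAbove ∘ (fun i => (finSuccAboveEquiv (w 0)).symm
      ⟨Fin.tail (Fin.tail w) i, tailtail_ne hw h i⟩) = Fin.tail (Fin.tail w) := by
    funext i
    exact succAbove_symm _ _ _
  rwa [this]

def fwd {m l : ℕ} (w : {w : Fin (m + 2) → Fin (l + 1) // Avoids11d1 w}) :
    (Fin l × {v : Fin (m + 1) → Fin (l + 1) // Avoids11d1 v}) ⊕
      (Fin (l + 1) × {u : Fin m → Fin l // Avoids11d1 u}) :=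
  if h : w.1 0 = w.1 (Fin.succ 0) then
    Sum.inr (w.1 0, ⟨fun i => (finSuccAboveEquiv (w.1 0)).symm
      ⟨Fin.tail (Fin.tail w.1) i, tailtail_ne w.2 h i⟩, fwd_avoids2 w.2 h⟩)
  else
    Sum.inl ((finSuccAboveEquiv (w.1 (Fin.succ 0))).symm ⟨w.1 0, h⟩,
      ⟨Fin.tail w.1, tail_avoids w.2⟩)

def bwd {m l : ℕ} :
    (Fin l × {v : Fin (m + 1) → Fin (l + 1) // Avoids11d1 v}) ⊕
      (Fin (l + 1) × {u : Fin m → Fin l // Avoids11d1 u}) →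
    {w : Fin (m + 2) → Fin (l + 1) // Avoids11d1 w}
  | Sum.inl (c, v) => ⟨Fin.cons ((v.1 0).succAbove c) v.1,
      (avoids_cons_iff _ _).mpr ⟨v.2, fun hav => absurd hav (Fin.succAbove_ne _ c)⟩⟩
  | Sum.inr (a, u) => ⟨Fin.cons a (Fin.cons a (fun i => a.succAbove (u.1 i))),
      (avoids_pair_iff a _ (fun i => Fin.succAbove_ne a (u.1 i))).mpr
        ((avoids_comp_iff _ Fin.succAbove_right_injective u.1).mpr u.2)⟩

lemma bwd_fwd {m l : ℕ} (w : {w : Fin (m + 2) → Fin (l + 1) // Avoids11d1 w}) :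
    bwd (fwd w) = w := by
  rcases w with ⟨w, hw⟩
  by_cases h : w 0 = w (Fin.succ 0)
  · unfold fwd
    rw [dif_pos h]
    show (⟨_, _⟩ : {w : Fin (m + 2) → Fin (l + 1) // Avoids11d1 w}) = _
    apply Subtype.ext
    funext i
    refine Fin.cases ?_ (fun j => ?_) i
    · simp only [Fin.cons_zero]
    · simp only [Fin.cons_succ]
      refine Fin.cases ?_ (fun t => ?_) j
      · simp only [Fin.cons_zero]
        exact h
      · simp only [Fin.cons_succ]
        exact succAbove_symm _ _ _
  · unfold fwd
    rw [dif_neg h]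
    show (⟨_, _⟩ : {w : Fin (m + 2) → Fin (l + 1) // Avoids11d1 w}) = _
    apply Subtype.ext
    funext i
    refine Fin.cases ?_ (fun j => ?_) i
    · simp only [Fin.cons_zero]
      exact succAbove_symm _ _ _
    · simp only [Fin.cons_succ]
      rfl

lemma fwd_bwd {m l : ℕ}
    (x : (Fin l × {v : Fin (m + 1) → Fin (l + 1) // Avoids11d1 v}) ⊕
      (Fin (l + 1) × {u : Fin m → Fin l // Avoids11d1 u})) :
    fwd (bwd x) = x := by
  rcases x with ⟨c, v, hv⟩ | ⟨a, u, hu⟩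
  · have hcond : ¬ ((Fin.cons ((v 0).succAbove c) v : Fin (m + 2) → Fin (l + 1)) 0
        = (Fin.cons ((v 0).succAbove c) v : Fin (m + 2) → Fin (l + 1)) (Fin.succ 0)) := by
      simp only [Fin.cons_zero, Fin.cons_succ]
      exact Fin.succAbove_ne (v 0) c
    unfold fwd bwd
    dsimp only
    rw [dif_neg hcond]
    refine congrArg Sum.inl (Prod.ext ?_ (Subtype.ext ?_))
    · dsimp only
      exact symm_succAbove (v 0) c _
    · dsimp only
      exact Fin.tail_cons _ _
  · have hcond : ((Fin.cons a (Fin.cons a (fun i => a.succAbove (u i))) :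
        Fin (m + 2) → Fin (l + 1)) 0
        = (Fin.cons a (Fin.cons a (fun i => a.succAbove (u i))) :
        Fin (m + 2) → Fin (l + 1)) (Fin.succ 0)) := by
      simp only [Fin.cons_zero, Fin.cons_succ]
    unfold fwd bwd
    dsimp only
    rw [dif_pos hcond]
    refine congrArg Sum.inr (Prod.ext ?_ (Subtype.ext ?_))
    · dsimp only
      exact Fin.cons_zero _ _
    · dsimp only
      funext i
      exact symm_succAbove a (u i) _

noncomputable def mainEquiv (m l : ℕ) :
    {w : Fin (m + 2) → Fin (l + 1) // Avoids11d1 w} ≃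
      ((Fin l × {v : Fin (m + 1) → Fin (l + 1) // Avoids11d1 v}) ⊕
        (Fin (l + 1) × {u : Fin m → Fin l // Avoids11d1 u})) :=
  ⟨fwd, bwd, bwd_fwd, fwd_bwd⟩

theorem stmt5 (n k : ℕ) (hn : 2 ≤ n) (hk : 1 ≤ k) :
    f n k = (k - 1) * f (n - 1) k + k * f (n - 2) (k - 1) := by
  obtain ⟨m, rfl⟩ : ∃ m, n = m + 2 := ⟨n - 2, by omega⟩
  obtain ⟨l, rfl⟩ : ∃ l, k = l + 1 := ⟨k - 1, by omega⟩
  have h1 : m + 2 - 1 = m + 1 := by omega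
  have h2 : m + 2 - 2 = m := by omega
  have h3 : l + 1 - 1 = l := by omega
  rw [h1, h2, h3]
  unfold f
  rw [Nat.card_congr (mainEquiv m l), Nat.card_sum, Nat.card_prod, Nat.card_prod]
  simp [Nat.card_eq_fintype_card]
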